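/- Let (S, E^Q) be a quantitative evidence frame with all p_i ∈ (0,1), let d be the minimum-dense-set evidence allocation function, and let J_SD be the strong denseness frame of justification (the set of nonempty elements of τ_E that intersect every nonempty element of τ_E). Define the qualitative belief operator B(P) = 1 iff there exists D ∈ τ_E with D ⊆ P and D ∩ T ≠ ∅ for all nonempty T ∈ τ_E. Then for every P ⊆ S: B(P) = 1 if and only if Bel_{J_SD}(d, P) > 0. -/

import Mathlib

open scoped Classical

/-- The mass function δ on subsets of the evidence index set. -/
noncomputable def evidMass {m : ℕ} (p : Fin m → ℝ) (B : Finset (Fin m)) : ℝ :=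
  (∏ i ∈ B, p i) * ∏ i ∈ Bᶜ, (1 - p i)

/-- `T` is a dense open set of the topology generated by the family `F`:
`T` is open, nonempty, and intersects every nonempty open set. -/
def DenseOpen {V : Type*} (F : Set (Set V)) (T : Set V) : Prop :=
  (TopologicalSpace.generateFrom F).IsOpen T ∧ T.Nonempty ∧
    ∀ U, (TopologicalSpace.generateFrom F).IsOpen U → U.Nonempty → (T ∩ U).Nonempty

/-- The pushed-forward mass `δ_τ(f, T)`. -/
noncomputable def deltaTau {V : Type*} [Fintype V] {m : ℕ}
    (E : Fin m → Set V) (p : Fin m → ℝ) (f : Finset (Fin m) → Set V)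
    (T : Set V) : ℝ :=
  if (TopologicalSpace.generateFrom (Set.range E)).IsOpen T then
    ∑ B : Finset (Fin m), if f B = T then evidMass p B else 0
  else 0

/-- The normalized mass restricted to the frame of justification `J`. -/
noncomputable def deltaJ {V : Type*} [Fintype V] {m : ℕ}
    (E : Fin m → Set V) (p : Fin m → ℝ) (f : Finset (Fin m) → Set V)
    (J : Set (Set V)) (A : Set V) : ℝ :=
  if A ∈ J then
    deltaTau E p f A / (∑ T : Set V, if T ∈ J then deltaTau E p f T else 0)
  else 0

/-- The multi-layer belief function `Bel_J(f, P) = ∑_{A ⊆ P} δ_J(f, A)`. -/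
noncomputable def belJ {V : Type*} [Fintype V] {m : ℕ}
    (E : Fin m → Set V) (p : Fin m → ℝ) (f : Finset (Fin m) → Set V)
    (J : Set (Set V)) (P : Set V) : ℝ :=
  ∑ A : Set V, if A ⊆ P then deltaJ E p f J A else 0

/-- The strong denseness frame of justification: all dense nonempty opens of `τ_E`. -/
def JSD {V : Type*} {m : ℕ} (E : Fin m → Set V) : Set (Set V) :=
  {T | DenseOpen (Set.range E) T}

/-! Every `δ(B)` is positive, so `Bel_J(f, P) > 0` iff some `A ∈ J` with `A ⊆ P` carries positive
mass `δ_τ(f, A)`. Members of `J_SD` are dense open sets, and the minimum dense open set `d(E)` of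
`τ_E` belongs to `J_SD`, carries mass at least `δ(E) > 0`, and lies inside every dense open `D ⊆ P`.
-/

section Mass

variable {V : Type*} [Fintype V] {m : ℕ} {E : Fin m → Set V} {p : Fin m → ℝ}
  {f : Finset (Fin m) → Set V}

lemma evidMass_nonneg (hp : ∀ i, p i ∈ Set.Icc (0 : ℝ) 1) (B : Finset (Fin m)) :
    0 ≤ evidMass p B :=
  mul_nonneg (Finset.prod_nonneg fun i _ => (hp i).1)
    (Finset.prod_nonneg fun i _ => sub_nonneg.mpr (hp i).2)

lemma evidMass_pos (hp : ∀ i, p i ∈ Set.Ioo (0 : ℝ) 1) (B : Finset (Fin m)) :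
    0 < evidMass p B :=
  mul_pos (Finset.prod_pos fun i _ => (hp i).1)
    (Finset.prod_pos fun i _ => sub_pos.mpr (hp i).2)

lemma deltaTau_nonneg (hp : ∀ i, p i ∈ Set.Icc (0 : ℝ) 1) (T : Set V) :
    0 ≤ deltaTau E p f T :=
  ite_nonneg (Finset.sum_nonneg fun B _ => ite_nonneg (evidMass_nonneg hp B) le_rfl) le_rfl

lemma deltaTau_apply_pos (hp : ∀ i, p i ∈ Set.Ioo (0 : ℝ) 1) {B : Finset (Fin m)}
    (hB : (TopologicalSpace.generateFrom (Set.range E)).IsOpen (f B)) :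
    0 < deltaTau E p f (f B) := by
  rw [deltaTau, if_pos hB]
  exact Finset.sum_pos' (fun C _ => ite_nonneg (evidMass_pos hp C).le le_rfl)
    ⟨B, Finset.mem_univ B, by simp [evidMass_pos hp B]⟩

lemma belJ_pos_iff (hp : ∀ i, p i ∈ Set.Icc (0 : ℝ) 1) {J : Set (Set V)} {P : Set V} :
    0 < belJ E p f J P ↔ ∃ A ∈ J, A ⊆ P ∧ 0 < deltaTau E p f A := by
  set Z := ∑ T : Set V, if T ∈ J then deltaTau E p f T else 0
  have hterm (T : Set V) : 0 ≤ if T ∈ J then deltaTau E p f T else 0 :=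
    ite_nonneg (deltaTau_nonneg hp T) le_rfl
  have hZ : 0 ≤ Z := Finset.sum_nonneg fun T _ => hterm T
  have hdeltaJ (A : Set V) : 0 ≤ deltaJ E p f J A :=
    ite_nonneg (div_nonneg (deltaTau_nonneg hp A) hZ) le_rfl
  rw [belJ, Finset.sum_pos_iff_of_nonneg fun A _ => ite_nonneg (hdeltaJ A) le_rfl]
  constructor
  · rintro ⟨A, -, hA⟩
    split_ifs at hA with hAP
    · rw [deltaJ] at hA
      split_ifs at hA with hAJ
      · exact ⟨A, hAJ, hAP, (deltaTau_nonneg hp A).lt_of_ne fun h => by simp [← h] at hA⟩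
      · exact absurd hA (lt_irrefl 0)
    · exact absurd hA (lt_irrefl 0)
  · rintro ⟨A, hAJ, hAP, hA⟩
    have hZpos : 0 < Z := by
      have hA_le := Finset.single_le_sum (fun T _ => hterm T) (Finset.mem_univ A)
      rw [if_pos hAJ] at hA_le
      exact hA.trans_le hA_le
    refine ⟨A, Finset.mem_univ A, ?_⟩
    rw [if_pos hAP, deltaJ, if_pos hAJ]
    exact div_pos hA hZpos

end Mass

section MinimumDenseOpen

variable {V : Type*} [Nonempty V]

lemma denseOpen_empty_iff {T : Set V} : DenseOpen (∅ : Set (Set V)) T ↔ T = Set.univ := by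
  have htop : TopologicalSpace.generateFrom (∅ : Set (Set V)) = ⊤ :=
    top_le_iff.mp (le_generateFrom fun _ h => absurd h (Set.notMem_empty _))
  have hopen (U : Set V) : (⊤ : TopologicalSpace V).IsOpen U ↔ U = ∅ ∨ U = Set.univ :=
    TopologicalSpace.isOpen_top_iff U
  rw [DenseOpen, htop]
  simp only [hopen]
  constructor
  · rintro ⟨hT | hT, hne, -⟩
    exacts [absurd hT hne.ne_empty, hT]
  · rintro rfl
    exact ⟨Or.inr rfl, Set.univ_nonempty, fun U _ hU => by rwa [Set.univ_inter]⟩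

variable {m : ℕ} {E : Fin m → Set V} {d : Finset (Fin m) → Set V}

lemma isLeast_denseOpen_image (hd0 : d ∅ = Set.univ)
    (hdmin : ∀ B : Finset (Fin m), B ≠ ∅ →
      DenseOpen (E '' ↑B) (d B) ∧ ∀ T, DenseOpen (E '' ↑B) T → d B ⊆ T)
    (B : Finset (Fin m)) : IsLeast {T | DenseOpen (E '' ↑B) T} (d B) := by
  rcases eq_or_ne B ∅ with rfl | hB
  · simp only [Finset.coe_empty, Set.image_empty, denseOpen_empty_iff, Set.ofPred_eq_eq_singleton,
      hd0]
    exact isLeast_singleton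
  · exact hdmin B hB

lemma isLeast_JSD (hd0 : d ∅ = Set.univ)
    (hdmin : ∀ B : Finset (Fin m), B ≠ ∅ →
      DenseOpen (E '' ↑B) (d B) ∧ ∀ T, DenseOpen (E '' ↑B) T → d B ⊆ T) :
    IsLeast (JSD E) (d Finset.univ) := by
  simpa only [JSD, Finset.coe_univ, Set.image_univ] using
    isLeast_denseOpen_image hd0 hdmin Finset.univ

end MinimumDenseOpen

/-- with the minimum-dense-set allocation function `d` and the
strong denseness frame of justification `J_SD`, the multi-layer belief function
reproduces the topological belief operator: `B(P) = 1` (there is a dense open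
`D ∈ τ_E` with `D ⊆ P`) iff `Bel_{J_SD}(d, P) > 0`. -/
theorem multilayer_reproduces_topological {V : Type*} [Fintype V] [Nonempty V] {m : ℕ}
    (E : Fin m → Set V) (p : Fin m → ℝ) (hp : ∀ i, p i ∈ Set.Ioo (0 : ℝ) 1)
    (d : Finset (Fin m) → Set V)
    (hd0 : d ∅ = Set.univ)
    (hdmin : ∀ B : Finset (Fin m), B ≠ ∅ →
      DenseOpen (E '' ↑B) (d B) ∧ ∀ T, DenseOpen (E '' ↑B) T → d B ⊆ T) :
    ∀ P : Set V,
      (∃ D : Set V, (TopologicalSpace.generateFrom (Set.range E)).IsOpen D ∧ D ⊆ P ∧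
        ∀ T, (TopologicalSpace.generateFrom (Set.range E)).IsOpen T → T.Nonempty →
          (D ∩ T).Nonempty)
      ↔ 0 < belJ E p d (JSD E) P := by
  intro P
  have hleast : IsLeast (JSD E) (d Finset.univ) := isLeast_JSD hd0 hdmin
  rw [belJ_pos_iff fun i => Set.Ioo_subset_Icc_self (hp i)]
  constructor
  · rintro ⟨D, hDopen, hDP, hDdense⟩
    have hDne : D.Nonempty := by
      simpa using hDdense _ (TopologicalSpace.generateFrom (Set.range E)).isOpen_univ
        Set.univ_nonempty
    exact ⟨d Finset.univ, hleast.1, (hleast.2 ⟨hDopen, hDne, hDdense⟩).trans hDP,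
      deltaTau_apply_pos hp hleast.1.1⟩
  · rintro ⟨A, hA, hAP, -⟩
    exact ⟨A, hA.1, hAP, hA.2.2⟩
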